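/- Let (P, ⊴) be a finite partial order and suppose every antichain of P has size at most M, where M = (2N+1)(N+1). Then P can be written as a union of at most M chains, and consequently for any coloring f : P → {0,1} that is constant equal to t on P, the set P is 'roughly definable' as a union of at most M(N+1) closed intervals of P when f is an N-indiscernible coloring of a larger poset containing P with P ⊆ f⁻¹(t). Concretely: if Q is a finite poset, f an N-indiscernible coloring of Q, t ∈ {0,1}, and P ⊆ f⁻¹(t) has all antichains of size ≤ M, then P ⊆ ⋃ of at most M(N+1) closed intervals [i, i']_Q each contained in f⁻¹(t). -/

import Mathlib

variable {P : Type*} [PartialOrder P]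

/-- An antichain: a set of pairwise incomparable elements. -/
def IsAC (A : Set P) : Prop := ∀ i ∈ A, ∀ j ∈ A, ¬ i < j

/-- A maximal antichain: an antichain to which no element can be added. -/
def IsMaxAC (A : Set P) : Prop := IsAC A ∧ ∀ x ∉ A, ¬ IsAC (insert x A)

/-- The (strict) downward closure of a set. -/
def dcl (A : Set P) : Set P := {i | ∃ j ∈ A, i < j}

/-- The (strict) upward closure of a set. -/
def ucl (A : Set P) : Set P := {i | ∃ j ∈ A, j < i}

/-- An `N`-indiscernible coloring: every antichain has at most `N` elements of one of the
two colors, and no chain alternates colors more than `2N+1` times. -/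
def IsIndiscColoring (N : ℕ) (f : P → ZMod 2) : Prop :=
  (∀ A : Set P, IsAC A → ∃ t : ZMod 2, (A ∩ f ⁻¹' {t}).ncard ≤ N) ∧
  ¬ ∃ g : ℕ → P, (∀ ℓ < 2 * N + 1, g ℓ < g (ℓ + 1)) ∧
      (∀ ℓ < 2 * N + 1, f (g ℓ) ≠ f (g (ℓ + 1)))

/-!
Dilworth's theorem, by Galvin's induction: remove a maximal element `a`, cover the rest by `k`
chains where `k` is its width, and in each chain take the highest point lying on a maximum
antichain; these tops form an antichain. If `a` is incomparable to all tops, it extends them to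
an antichain of size `k + 1`. Otherwise `a` together with the part of one chain below its top is
a chain whose removal lowers the width to `k - 1`.

For the intervals, each chain is covered greedily from the bottom by maximal intervals inside
`f⁻¹(t)`; between two consecutive intervals the colour changes twice, so `N + 1` intervals
suffice unless some chain alternates `2N + 2` times.
-/

open Set

theorem IsAntichain.isAC {A : Set P} (hA : IsAntichain (· ≤ ·) A) : IsAC A :=
  fun _ hi _ hj => hA.not_lt hi hj

theorem IsChain.exists_isGreatest {α : Type*} [Preorder α] {s : Set α}
    (hs : IsChain (· ≤ ·) s) (hfin : s.Finite) (hne : s.Nonempty) : ∃ a, IsGreatest s a := by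
  obtain ⟨a, ha, hmax⟩ := hfin.exists_maximal hne
  exact ⟨a, ha, fun x hx => (hs.total hx ha).elim id (hmax hx)⟩

theorem IsChain.exists_isLeast {α : Type*} [Preorder α] {s : Set α}
    (hs : IsChain (· ≤ ·) s) (hfin : s.Finite) (hne : s.Nonempty) : ∃ a, IsLeast s a := by
  obtain ⟨a, ha, hmin⟩ := hfin.exists_minimal hne
  exact ⟨a, ha, fun x hx => (hs.total ha hx).elim id (hmin hx)⟩

theorem IsAntichain.subsingleton_inter_of_isChain {A C : Set P} (hA : IsAntichain (· ≤ ·) A)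
    (hC : IsChain (· ≤ ·) C) : (A ∩ C).Subsingleton := fun _ hx _ hy =>
  (hC.total hx.2 hy.2).elim (hA.eq hx.1 hy.1) (hA.eq' hx.1 hy.1)

def IsChainCover (𝒞 : Finset (Set P)) (S : Set P) : Prop :=
  (∀ C ∈ 𝒞, IsChain (· ≤ ·) C) ∧ ⋃₀ ↑𝒞 = S

namespace IsChainCover

variable {𝒞 : Finset (Set P)} {S : Set P}

theorem subset (h : IsChainCover 𝒞 S) {C : Set P} (hC : C ∈ 𝒞) : C ⊆ S :=
  h.2 ▸ subset_sUnion_of_mem hC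

theorem insert {K : Set P} (h : IsChainCover 𝒞 (S \ K)) (hK : IsChain (· ≤ ·) K)
    (hKS : K ⊆ S) : IsChainCover (insert K 𝒞) S := by
  refine ⟨Finset.forall_mem_insert _ _ _ |>.2 ⟨hK, h.1⟩, ?_⟩
  rw [Finset.coe_insert, sUnion_insert, h.2, union_sdiff_cancel hKS]

theorem exists_fin (h : IsChainCover 𝒞 S) {M : ℕ} (hM : 𝒞.card ≤ M) :
    ∃ c : Fin M → Set P, (∀ m, IsChain (· ≤ ·) (c m)) ∧ S = ⋃ m, c m := by
  let c : Fin M → Set P := fun m =>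
    if hm : (m : ℕ) < 𝒞.card then 𝒞.equivFin.symm ⟨m, hm⟩ else ∅
  refine ⟨c, fun m => ?_, ?_⟩
  · unfold c
    split
    · exact h.1 _ (Subtype.mem _)
    · exact subsingleton_empty.isChain
  · ext x
    simp only [mem_iUnion]
    constructor
    · intro hx
      obtain ⟨C, hC, hxC⟩ := mem_sUnion.1 (h.2.symm ▸ hx)
      refine ⟨Fin.castLE hM (𝒞.equivFin ⟨C, hC⟩), ?_⟩
      simpa [c] using hxC
    · rintro ⟨m, hm⟩
      unfold c at hm
      split at hm
      · exact h.subset (Subtype.mem _) hm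
      · exact hm.elim

/-- An antichain meets each chain at most once. -/
theorem ncard_le_card (h : IsChainCover 𝒞 S) {A : Set P} (hA : IsAntichain (· ≤ ·) A)
    (hAS : A ⊆ S) : A.ncard ≤ 𝒞.card := by
  have hcov : ∀ x ∈ A, ∃ C ∈ 𝒞, x ∈ C := fun x hx => by
    simpa [← h.2] using hAS hx
  choose! φ hφ𝒞 hxφ using hcov
  rw [← ncard_coe_finset]
  exact ncard_le_ncard_of_injOn φ hφ𝒞 fun x hx y hy hxy =>
    hA.subsingleton_inter_of_isChain (h.1 _ (hφ𝒞 x hx)) ⟨hx, hxφ x hx⟩ ⟨hy, hxy ▸ hxφ y hy⟩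

theorem exists_mem_antichain_of_card_le (h : IsChainCover 𝒞 S) {A : Set P}
    (hA : IsAntichain (· ≤ ·) A) (hAS : A ⊆ S) (hcard : 𝒞.card ≤ A.ncard) {C : Set P}
    (hC : C ∈ 𝒞) : ∃ y ∈ A, y ∈ C ∧ ∀ D ∈ 𝒞, y ∈ D → D = C := by
  by_contra! hno
  have hsub : A ⊆ ⋃₀ ↑(𝒞.erase C) := by
    intro y hy
    obtain ⟨D, hD, hyD⟩ := mem_sUnion.1 (h.2 ▸ hAS hy : y ∈ ⋃₀ ↑𝒞)
    by_cases hDC : D = C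
    · obtain ⟨E, hE, hyE, hEC⟩ := hno y hy (hDC ▸ hyD)
      exact ⟨E, Finset.mem_erase.2 ⟨hEC, hE⟩, hyE⟩
    · exact ⟨D, Finset.mem_erase.2 ⟨hDC, hD⟩, hyD⟩
  have hle := IsChainCover.ncard_le_card
    ⟨fun D hD => h.1 D (Finset.mem_of_mem_erase hD), rfl⟩ hA hsub
  rw [Finset.card_erase_of_mem hC] at hle
  have := Finset.card_pos.2 ⟨C, hC⟩
  omega

/-- Galvin's choice of tops: in each chain, the highest point lying on an antichain of size
`≥ k`. -/
theorem exists_antichain_card_eq (h : IsChainCover 𝒞 S) (hS : S.Finite) {k : ℕ}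
    (hcard : 𝒞.card ≤ k) (hk : ∃ A ⊆ S, IsAntichain (· ≤ ·) A ∧ k ≤ A.ncard) :
    ∃ X ⊆ S, IsAntichain (· ≤ ·) X ∧ X.ncard = 𝒞.card ∧ ∀ x ∈ X, ∃ C ∈ 𝒞,
      ∀ B ⊆ S, IsAntichain (· ≤ ·) B → k ≤ B.ncard → ∃ z ∈ B, z ∈ C ∧ z ≤ x := by
  set G : Set P := {z | ∃ B ⊆ S, IsAntichain (· ≤ ·) B ∧ k ≤ B.ncard ∧ z ∈ B}
  have htop : ∀ C : 𝒞, ∃ x, IsGreatest (C.1 ∩ G) x := by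
    intro ⟨C, hC⟩
    obtain ⟨A, hAS, hA, hkA⟩ := hk
    obtain ⟨y, hyA, hyC, -⟩ := h.exists_mem_antichain_of_card_le hA hAS (hcard.trans hkA) hC
    exact ((h.1 C hC).mono inter_subset_left).exists_isGreatest
      (hS.subset (inter_subset_left.trans (h.subset hC))) ⟨y, hyC, A, hAS, hA, hkA, hyA⟩
  choose x hx using htop
  have hbelow : ∀ C : 𝒞, ∀ B ⊆ S, IsAntichain (· ≤ ·) B → k ≤ B.ncard →
      ∃ z ∈ B, z ∈ C.1 ∧ z ≤ x C := by
    intro C B hBS hB hkB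
    obtain ⟨z, hzB, hzC, -⟩ := h.exists_mem_antichain_of_card_le hB hBS (hcard.trans hkB) C.2
    exact ⟨z, hzB, hzC, (hx C).2 ⟨hzC, B, hBS, hB, hkB, hzB⟩⟩
  have hinj : Function.Injective x := by
    intro C D hCD
    obtain ⟨-, B, hBS, hB, hkB, hxB⟩ := (hx C).1
    obtain ⟨y, hyB, hyC, hyuniq⟩ :=
      h.exists_mem_antichain_of_card_le hB hBS (hcard.trans hkB) C.2
    have hyx : y = x C :=
      hB.subsingleton_inter_of_isChain (h.1 C C.2) ⟨hyB, hyC⟩ ⟨hxB, (hx C).1.1⟩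
    exact Subtype.ext (hyuniq D D.2 (hyx ▸ hCD ▸ (hx D).1.1)).symm
  refine ⟨range x, range_subset_iff.2 fun C => h.subset C.2 (hx C).1.1, ?_, ?_,
    fun _ ⟨C, hCx⟩ => ⟨C, C.2, hCx ▸ hbelow C⟩⟩
  · rintro _ ⟨C, rfl⟩ _ ⟨D, rfl⟩ hne hle
    obtain ⟨-, B, hBS, hB, hkB, hxB⟩ := (hx D).1
    obtain ⟨z, hzB, -, hzx⟩ := hbelow C B hBS hB hkB
    exact hne (hle.antisymm (hB.eq hzB hxB (hzx.trans hle) ▸ hzx))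
  · rw [ncard_range_of_injective hinj, Nat.card_eq_fintype_card, Fintype.card_coe]

end IsChainCover

theorem Set.Finite.exists_antichain_ncard_max {S : Set P} (hS : S.Finite) :
    ∃ A ⊆ S, IsAntichain (· ≤ ·) A ∧ ∀ B ⊆ S, IsAntichain (· ≤ ·) B → B.ncard ≤ A.ncard := by
  obtain ⟨A, ⟨hAS, hA⟩, hAmax⟩ :=
    exists_max_image {A | A ⊆ S ∧ IsAntichain (· ≤ ·) A} ncard
      (hS.finite_subsets.subset fun _ hA => hA.1)
      ⟨∅, empty_subset _, subsingleton_empty.isAntichain _⟩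
  exact ⟨A, hAS, hA, fun B hBS hB => hAmax B ⟨hBS, hB⟩⟩

theorem exists_chainCover_card_le {S : Set P} (hS : S.Finite) {M : ℕ}
    (hM : ∀ A ⊆ S, IsAntichain (· ≤ ·) A → A.ncard ≤ M) :
    ∃ 𝒞 : Finset (Set P), 𝒞.card ≤ M ∧ IsChainCover 𝒞 S := by
  induction hn : S.ncard using Nat.strong_induction_on generalizing S M with
  | _ n ih =>
  rcases S.eq_empty_or_nonempty with rfl | hne
  · exact ⟨∅, by simp, by simp, by simp⟩
  obtain ⟨a, haS, hamax⟩ := hS.exists_maximal hne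
  have hlt : ∀ T ⊆ S, a ∉ T → T.ncard < n := fun T hTS haT =>
    hn ▸ ncard_lt_ncard (ssubset_of_subset_of_ne hTS (fun h => haT (h ▸ haS))) hS
  obtain ⟨A₀, hA₀S, hA₀, hA₀max⟩ := hS.sdiff.exists_antichain_ncard_max (S := S \ {a})
  obtain ⟨𝒞, h𝒞k, h𝒞⟩ := ih _ (hlt _ sdiff_subset (by simp)) hS.sdiff hA₀max rfl
  obtain ⟨X, hXS, hX, hXcard, hXbelow⟩ :=
    h𝒞.exists_antichain_card_eq hS.sdiff h𝒞k ⟨A₀, hA₀S, hA₀, le_rfl⟩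
  have hkM : A₀.ncard ≤ M := hM A₀ (hA₀S.trans sdiff_subset) hA₀
  by_cases hcomp : ∃ x ∈ X, x ≤ a
  · obtain ⟨x, hxX, hxa⟩ := hcomp
    obtain ⟨C, hC, hCbelow⟩ := hXbelow x hxX
    set K : Set P := insert a {z ∈ C | z ≤ x}
    have hK : IsChain (· ≤ ·) K :=
      ((h𝒞.1 C hC).mono (sep_subset _ _)).insert fun z hz _ => .inr (hz.2.trans hxa)
    have hKS : K ⊆ S :=
      insert_subset haS (((sep_subset _ _).trans (h𝒞.subset hC)).trans sdiff_subset)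
    have hwidth : ∀ B ⊆ S \ K, IsAntichain (· ≤ ·) B → B.ncard ≤ A₀.ncard - 1 := by
      intro B hBS hB
      by_contra! hlarge
      have hBS' : B ⊆ S \ {a} := fun z hz => ⟨(hBS hz).1, fun h => (hBS hz).2 (.inl h)⟩
      obtain ⟨z, hzB, hzC, hzx⟩ := hCbelow B hBS' hB (by omega)
      exact (hBS hzB).2 (.inr ⟨hzC, hzx⟩)
    obtain ⟨𝒟, h𝒟k, h𝒟⟩ := ih _ (hlt _ sdiff_subset fun h => h.2 (mem_insert a _)) hS.sdiff
      hwidth rfl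
    have := Finset.card_pos.2 ⟨C, hC⟩
    exact ⟨insert K 𝒟, (Finset.card_insert_le _ _).trans (by omega), h𝒟.insert hK hKS⟩
  · push Not at hcomp
    have hanti : IsAntichain (· ≤ ·) (insert a X) :=
      hX.insert (fun x hxX _ => hcomp x hxX)
        (fun x hxX _ hle => hcomp x hxX (hamax (hXS hxX).1 hle))
    have hcard : (insert a X).ncard = 𝒞.card + 1 := by
      rw [ncard_insert_of_notMem (fun haX => (hXS haX).2 rfl) (hS.sdiff.subset hXS), hXcard]
    have := hM _ (insert_subset haS (hXS.trans sdiff_subset)) hanti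
    exact ⟨insert {a} 𝒞, (Finset.card_insert_le _ _).trans (by omega),
      h𝒞.insert subsingleton_singleton.isChain (singleton_subset_iff.2 haS)⟩

def IsIntervalCover (I : Finset (P × P)) (T S : Set P) : Prop :=
  (∀ p ∈ I, Icc p.1 p.2 ⊆ T) ∧ S ⊆ ⋃ p ∈ I, Icc p.1 p.2

theorem IsIntervalCover.exists_fin {I : Finset (P × P)} {T S : Set P}
    (h : IsIntervalCover I T S) :
    ∃ a b : Fin I.card → P, (∀ m, Icc (a m) (b m) ⊆ T) ∧ S ⊆ ⋃ m, Icc (a m) (b m) := by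
  refine ⟨fun m => (I.equivFin.symm m).1.1, fun m => (I.equivFin.symm m).1.2,
    fun m => h.1 _ (I.equivFin.symm m).2, fun x hx => ?_⟩
  obtain ⟨p, hp, hxp⟩ := mem_iUnion₂.1 (h.2 hx)
  exact mem_iUnion.2 ⟨I.equivFin ⟨p, hp⟩, by simpa using hxp⟩

theorem IsChainCover.exists_intervalCover {𝒞 : Finset (Set P)} {S T : Set P}
    (h : IsChainCover 𝒞 S) {n : ℕ}
    (hchain : ∀ C ∈ 𝒞, ∃ I : Finset (P × P), I.card ≤ n ∧ IsIntervalCover I T C) :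
    ∃ I : Finset (P × P), I.card ≤ 𝒞.card * n ∧ IsIntervalCover I T S := by
  classical
  choose! J hJn hJ using hchain
  refine ⟨𝒞.biUnion J, Finset.card_biUnion_le_card_mul _ _ _ hJn, ?_, ?_⟩
  · simp only [Finset.mem_biUnion]
    rintro p ⟨C, hC, hp⟩
    exact (hJ C hC).1 p hp
  · rw [← h.2]
    rintro x ⟨C, hC, hxC⟩
    obtain ⟨p, hp, hxp⟩ := mem_iUnion₂.1 ((hJ C hC).2 hxC)
    exact mem_iUnion₂.2 ⟨p, Finset.mem_biUnion.2 ⟨C, hC, hp⟩, hxp⟩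

/-- Greedy covering from the bottom: each new interval starts at the least uncovered point and
is as long as possible; if `m` intervals do not suffice, the failures give `2m` colour changes
along an increasing sequence. -/
theorem IsChain.intervalCover_or_alternating {β : Type*} (f : P → β) (t : β) (m : ℕ)
    {C : Set P} (hC : IsChain (· ≤ ·) C) (hfin : C.Finite) (hCt : C ⊆ f ⁻¹' {t}) :
    (∃ I : Finset (P × P), I.card ≤ m ∧ IsIntervalCover I (f ⁻¹' {t}) C) ∨
      ∃ g : ℕ → P, g 0 ∈ C ∧ ∀ ℓ < 2 * m, g ℓ < g (ℓ + 1) ∧ f (g ℓ) ≠ f (g (ℓ + 1)) := by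
  classical
  induction m generalizing C with
  | zero =>
    rcases C.eq_empty_or_nonempty with rfl | ⟨c, hc⟩
    · exact .inl ⟨∅, le_rfl, by simp, empty_subset _⟩
    · exact .inr ⟨fun _ => c, hc, by simp⟩
  | succ m ih =>
    rcases C.eq_empty_or_nonempty with rfl | hne
    · exact .inl ⟨∅, by simp, by simp, empty_subset _⟩
    obtain ⟨c₀, hc₀C, hc₀le⟩ := hC.exists_isLeast hfin hne
    have hc₀t : f c₀ = t := hCt hc₀C
    obtain ⟨b, ⟨hbC, hbt⟩, hbmax⟩ :=
      (hC.mono (sep_subset C fun x => Icc c₀ x ⊆ f ⁻¹' {t})).exists_isGreatest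
        (hfin.subset (sep_subset _ _)) ⟨c₀, hc₀C, by simpa using hc₀t⟩
    rcases ih (C := {x ∈ C | b < x}) (hC.mono (sep_subset _ _)) (hfin.subset (sep_subset _ _))
      ((sep_subset _ _).trans hCt) with ⟨I, hIm, hI⟩ | ⟨g, ⟨hg0C, hbg0⟩, hg⟩
    · refine .inl ⟨insert (c₀, b) I, (Finset.card_insert_le _ _).trans (by omega),
        Finset.forall_mem_insert _ _ _ |>.2 ⟨hbt, hI.1⟩, fun x hx => ?_⟩
      simp only [Finset.mem_insert, iUnion_iUnion_eq_or_left, mem_union]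
      by_cases hbx : b < x
      · exact .inr (hI.2 ⟨hx, hbx⟩)
      · exact .inl ⟨hc₀le hx, (hC.total hx hbC).elim id fun hbx' =>
          (eq_of_le_of_not_lt hbx' hbx).ge⟩
    · -- `g 0` lies above `b`, so `[c₀, g 0]` leaves the colour `t`
      obtain ⟨y, ⟨hc₀y, hyg⟩, hyt⟩ : ∃ y ∈ Icc c₀ (g 0), f y ≠ t :=
        not_subset.1 fun h => (hbg0.trans_le (hbmax ⟨hg0C, h⟩)).false
      have hg0t : f (g 0) = t := hCt hg0C
      refine .inr ⟨fun | 0 => c₀ | 1 => y | ℓ + 2 => g ℓ, hc₀C, ?_⟩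
      rintro (_ | _ | ℓ) hℓ
      · exact ⟨hc₀y.lt_of_ne (by rintro rfl; exact hyt hc₀t), hc₀t ▸ Ne.symm hyt⟩
      · exact ⟨hyg.lt_of_ne (by rintro rfl; exact hyt hg0t), hg0t ▸ hyt⟩
      · exact hg ℓ (by omega)

theorem IsIndiscColoring.exists_intervalCover_of_isChain {N : ℕ} {f : P → ZMod 2}
    (hf : IsIndiscColoring N f) {t : ZMod 2} {C : Set P} (hC : IsChain (· ≤ ·) C)
    (hfin : C.Finite) (hCt : C ⊆ f ⁻¹' {t}) :
    ∃ I : Finset (P × P), I.card ≤ N + 1 ∧ IsIntervalCover I (f ⁻¹' {t}) C :=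
  (hC.intervalCover_or_alternating f t (N + 1) hfin hCt).resolve_right fun ⟨g, _, hg⟩ =>
    hf.2 ⟨g, fun ℓ hℓ => (hg ℓ (by omega)).1, fun ℓ hℓ => (hg ℓ (by omega)).2⟩

/-- If every antichain of a subset `S` of a finite poset `P` has size at most
`M = (2N+1)(N+1)`, then `S` is a union of at most `M` chains; consequently, if moreover
`f` is an `N`-indiscernible coloring of `P` and `S ⊆ f⁻¹(t)`, then `S` is covered by at
most `M(N+1)` closed intervals of `P` each contained in `f⁻¹(t)`. -/
theorem stmt_15 [Fintype P] (N : ℕ) (f : P → ZMod 2) (hf : IsIndiscColoring N f)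
    (t : ZMod 2) (S : Set P) (hSt : S ⊆ f ⁻¹' {t})
    (hanti : ∀ A ⊆ S, IsAC A → A.ncard ≤ (2 * N + 1) * (N + 1)) :
    (∃ c : Fin ((2 * N + 1) * (N + 1)) → Set P,
      (∀ m, IsChain (· ≤ ·) (c m)) ∧ S = ⋃ m, c m) ∧
    ∃ k ≤ (2 * N + 1) * (N + 1) * (N + 1), ∃ a b : Fin k → P,
      (∀ m, Set.Icc (a m) (b m) ⊆ f ⁻¹' {t}) ∧ S ⊆ ⋃ m, Set.Icc (a m) (b m) := by
  obtain ⟨𝒞, h𝒞M, h𝒞⟩ :=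
    exists_chainCover_card_le S.toFinite fun A hAS hA => hanti A hAS hA.isAC
  refine ⟨h𝒞.exists_fin h𝒞M, ?_⟩
  obtain ⟨I, hIcard, hI⟩ := h𝒞.exists_intervalCover fun C hC =>
    hf.exists_intervalCover_of_isChain (h𝒞.1 C hC) C.toFinite ((h𝒞.subset hC).trans hSt)
  exact ⟨I.card, hIcard.trans (Nat.mul_le_mul_right _ h𝒞M), hI.exists_fin⟩
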